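/- Let λ > 0 and let u be a positive solution of the radial problem with u′ ≤ 0 on [3/4,1] and u(r) < u₀/2 for all r ∈ [3/4, 1). Then there is a constant C > 0, independent of λ and u, such that u(r) ≥ C λ^{1/(p−1)} (1 − r)^{p/(p−1)} for all r ∈ [3/4, 1). -/

import Mathlib

open Set Filter MeasureTheory

/-- `u` (with derivative `u'`) is a positive solution of the radial problem
`(r^(N-1) φ(u'(r)))' = -λ r^(N-1) f(u(r))` on `(0,1)`, with `u'(0) = 0`, `u(1) = 0`,
`u ∈ C¹([0,1])`, `φ ∘ u' ∈ C¹((0,1))`, and `u > 0` on `[0,1)`. -/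
structure IsPosSol (N : ℕ) (φ f : ℝ → ℝ) (lam : ℝ) (u u' : ℝ → ℝ) : Prop where
  hasDeriv : ∀ r ∈ Set.Icc (0:ℝ) 1, HasDerivAt u (u' r) r
  contDeriv : ContinuousOn u' (Set.Icc 0 1)
  pos : ∀ r ∈ Set.Ico (0:ℝ) 1, 0 < u r
  phiC1 : ∃ w : ℝ → ℝ, ContinuousOn w (Set.Ioo 0 1) ∧
    ∀ r ∈ Set.Ioo (0:ℝ) 1, HasDerivAt (fun s => φ (u' s)) (w r) r
  eqn : ∀ r ∈ Set.Ioo (0:ℝ) 1,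
    HasDerivAt (fun s => s ^ (N - 1) * φ (u' s)) (-(lam * r ^ (N - 1) * f (u r))) r
  deriv_zero : u' 0 = 0
  bd : u 1 = 0


/-!
On `[3/4, 1]` we have `f(u) ≤ f(u₀/2) < 0`, so the flux `r^(N-1) φ(u')` grows at rate at least
`λ (3/4)^(N-1) |f(u₀/2)|`; as it is `≤ 0` at `r = 1`, this gives `φ(-u'(r)) ≥ c λ (1 - r)`.
The growth bound `φ(s) ≤ ĉ₁ s^(p-1)` turns this into `-u'(r) ≥ c' (λ (1 - r))^(1/(p-1))`, and
integrating from `r` to `1`, where `u` vanishes, gives the claim.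
-/

theorem MonotoneOn.neg_of_lt_unique_zero {f : ℝ → ℝ} {z a : ℝ} (hfm : MonotoneOn f (Ici 0))
    (hfz : f z = 0) (hzero : ∀ s, 0 ≤ s → f s = 0 → s = z) (ha : 0 ≤ a) (haz : a < z) :
    f a < 0 :=
  hfz ▸ (hfm ha (ha.trans haz.le) haz.le).lt_of_ne
    fun h => haz.ne (hzero a ha (h.trans hfz))

theorem div_mul_rpow_le_sub_of_deriv_le {u u' : ℝ → ℝ} {a b A q : ℝ} (hq : 0 < q)
    (hu : ContinuousOn u (Icc a b)) (hu' : ∀ x ∈ Ioo a b, HasDerivAt u (u' x) x)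
    (hbound : ∀ x ∈ Ioo a b, A * (b - x) ^ (q - 1) ≤ -u' x) :
    ∀ r ∈ Icc a b, A / q * (b - r) ^ q ≤ u r - u b := by
  intro r hr
  have hderiv : ∀ x ∈ Ioo a b, HasDerivAt (fun s => u s - A / q * (b - s) ^ q)
      (u' x + A * (b - x) ^ (q - 1)) x := by
    intro x hx
    have hpow := ((hasDerivAt_id' x).const_sub b).rpow_const (p := q)
      (Or.inl (sub_ne_zero.2 hx.2.ne'))
    exact ((hu' x hx).sub (hpow.const_mul (A / q))).congr_deriv (by field_simp; ring)
  have hanti := (convex_Icc a b).image_sub_le_mul_sub_of_deriv_le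
    (f := fun s => u s - A / q * (b - s) ^ q) (C := 0)
    (hu.sub (continuousOn_const.mul
      ((continuousOn_const.sub continuousOn_id).rpow_const fun _ _ => Or.inr hq.le)))
    (fun x hx => by
      rw [interior_Icc] at hx
      exact (hderiv x hx).differentiableAt.differentiableWithinAt)
    (fun x hx => by
      rw [interior_Icc] at hx
      rw [(hderiv x hx).deriv]
      linarith [hbound x hx])
    r hr b (right_mem_Icc.2 (hr.1.trans hr.2)) hr.2
  rw [sub_self, Real.zero_rpow hq.ne'] at hanti
  linarith

section RadialSolution

variable {N : ℕ} {φ f : ℝ → ℝ} {lam : ℝ} {u u' : ℝ → ℝ}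

theorem IsPosSol.continuousOn (hsol : IsPosSol N φ f lam u u') : ContinuousOn u (Icc 0 1) :=
  fun x hx => (hsol.hasDeriv x hx).continuousAt.continuousWithinAt

theorem IsPosSol.mul_sub_le_flux_sub (hsol : IsPosSol N φ f lam u u') (hφ : Continuous φ)
    {a m : ℝ} (ha : 0 ≤ a) (hlam : 0 ≤ lam) (hm0 : 0 ≤ m) (hm : ∀ x ∈ Ioo a 1, m ≤ -f (u x)) :
    ∀ s ∈ Icc a 1, lam * (a ^ (N - 1) * m) * (1 - s) ≤ φ (u' 1) - s ^ (N - 1) * φ (u' s) := by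
  have hIcc : Icc a 1 ⊆ Icc 0 1 := Icc_subset_Icc_left ha
  have hIoo : Ioo a 1 ⊆ Ioo 0 1 := Ioo_subset_Ioo_left ha
  intro s hs
  have h := (convex_Icc a 1).mul_sub_le_image_sub_of_le_deriv
    (f := fun s => s ^ (N - 1) * φ (u' s)) (C := lam * (a ^ (N - 1) * m))
    ((continuous_pow _).continuousOn.mul (hφ.comp_continuousOn (hsol.contDeriv.mono hIcc)))
    (fun x hx => by
      rw [interior_Icc] at hx
      exact (hsol.eqn x (hIoo hx)).differentiableAt.differentiableWithinAt)
    (fun x hx => by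
      rw [interior_Icc] at hx
      rw [(hsol.eqn x (hIoo hx)).deriv, neg_mul_eq_mul_neg, mul_assoc]
      exact mul_le_mul_of_nonneg_left (mul_le_mul (pow_le_pow_left₀ ha hx.1.le _)
        (hm x hx) hm0 (pow_nonneg (ha.trans hx.1.le) _)) hlam)
    s hs 1 (right_mem_Icc.2 (hs.1.trans hs.2)) hs.2
  simpa only [one_pow, one_mul] using h

theorem IsPosSol.mul_sub_le_phi_neg_deriv (hsol : IsPosSol N φ f lam u u') (hφ : Continuous φ)
    (hφodd : ∀ s, φ (-s) = -φ s) (hφnn : ∀ s, 0 ≤ s → 0 ≤ φ s) {a m : ℝ} (ha : 0 ≤ a)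
    (hlam : 0 ≤ lam) (hm0 : 0 ≤ m) (hm : ∀ x ∈ Ioo a 1, m ≤ -f (u x))
    (hu' : ∀ s ∈ Icc a 1, u' s ≤ 0) :
    ∀ s ∈ Icc a 1, lam * (a ^ (N - 1) * m) * (1 - s) ≤ φ (-u' s) := by
  intro s hs
  have hflux := hsol.mul_sub_le_flux_sub hφ ha hlam hm0 hm s hs
  have hend : φ (u' 1) ≤ 0 := by
    have := hφnn _ (neg_nonneg.2 (hu' 1 (right_mem_Icc.2 (hs.1.trans hs.2))))
    rw [hφodd] at this
    linarith
  have hs0 : 0 ≤ s := ha.trans hs.1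
  have hweight : s ^ (N - 1) * φ (-u' s) ≤ φ (-u' s) :=
    mul_le_of_le_one_left (hφnn _ (neg_nonneg.2 (hu' s hs))) (pow_le_one₀ hs0 hs.2)
  rw [hφodd] at hweight ⊢
  linarith

end RadialSolution

theorem lower_bound_near_boundary_general    (N : ℕ)
    (ϕ φ : ℝ → ℝ)
    (hϕc : Continuous ϕ) (hϕnn : ∀ s, 0 ≤ ϕ s) (hϕeven : ∀ s, ϕ (-s) = ϕ s)
    (hφ : ∀ s, φ s = ϕ s * s)
    (p c1 c2 : ℝ) (hp : 1 < p) (hc1 : 0 < c1)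
    (hgrow : ∀ r : ℝ, 0 ≤ r → c2 * r ^ (p - 1) ≤ φ r ∧ φ r ≤ c1 * r ^ (p - 1))
    (f : ℝ → ℝ) (hfm : MonotoneOn f (Set.Ici 0))
    (u0 : ℝ) (hu0 : 0 < u0) (hfu0 : f u0 = 0)
    (hzero : ∀ s : ℝ, 0 ≤ s → f s = 0 → s = u0)
 :
    ∃ C : ℝ, 0 < C ∧
      ∀ lam : ℝ, 0 < lam → ∀ u u' : ℝ → ℝ, IsPosSol N φ f lam u u' →
        (∀ r ∈ Set.Icc (3/4 : ℝ) 1, u' r ≤ 0) →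
        (∀ r ∈ Set.Ico (3/4 : ℝ) 1, u r < u0 / 2) →
        ∀ r ∈ Set.Ico (3/4 : ℝ) 1,
          C * lam ^ (1 / (p - 1)) * (1 - r) ^ (p / (p - 1)) ≤ u r := by
  have hφc : Continuous φ := by rw [funext hφ]; exact hϕc.mul continuous_id
  have hφodd : ∀ s, φ (-s) = -φ s := fun s => by rw [hφ, hφ, hϕeven]; ring
  have hφnn : ∀ s, 0 ≤ s → 0 ≤ φ s := fun s hs => (hφ s).symm ▸ mul_nonneg (hϕnn s) hs
  have hf_half : f (u0 / 2) < 0 :=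
    hfm.neg_of_lt_unique_zero hfu0 hzero (by linarith) (by linarith)
  set K := (3 / 4 : ℝ) ^ (N - 1) * -f (u0 / 2)
  have hK : 0 < K := mul_pos (by positivity) (neg_pos.2 hf_half)
  have hp1 : 0 < p - 1 := by linarith
  have hq : p / (p - 1) - 1 = 1 / (p - 1) := by field_simp; ring
  refine ⟨(K / c1) ^ (1 / (p - 1)) * ((p - 1) / p),
    mul_pos (Real.rpow_pos_of_pos (div_pos hK hc1) _) (div_pos hp1 (by linarith)), ?_⟩
  intro lam hlam u u' hsol hu'_nonpos hu_small r hr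
  have hf_u : ∀ x ∈ Ioo (3 / 4 : ℝ) 1, -f (u0 / 2) ≤ -f (u x) := fun x hx =>
    neg_le_neg (hfm (hsol.pos x ⟨by linarith [hx.1], hx.2⟩).le (show (0 : ℝ) ≤ u0 / 2 by linarith)
      (hu_small x ⟨hx.1.le, hx.2⟩).le)
  have hflux := hsol.mul_sub_le_phi_neg_deriv hφc hφodd hφnn (by norm_num) hlam.le
    (neg_nonneg.2 hf_half.le) hf_u hu'_nonpos
  have hgrad : ∀ x ∈ Ioo (3 / 4 : ℝ) 1,
      (lam * K / c1) ^ (1 / (p - 1)) * (1 - x) ^ (p / (p - 1) - 1) ≤ -u' x := by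
    intro x hx
    rw [hq]
    have hw : 0 ≤ -u' x := neg_nonneg.2 (hu'_nonpos x ⟨hx.1.le, hx.2.le⟩)
    have hy : 0 ≤ lam * K * (1 - x) := mul_nonneg (by positivity) (by linarith [hx.2])
    have := (Real.rpow_inv_le_iff_of_pos (div_nonneg hy hc1.le) hw hp1).2
      ((div_le_iff₀' hc1).2 ((hflux x ⟨hx.1.le, hx.2.le⟩).trans (hgrow _ hw).2))
    rwa [mul_div_right_comm, Real.mul_rpow (by positivity) (by linarith [hx.2]), ← one_div] at this
  have hbound := div_mul_rpow_le_sub_of_deriv_le (div_pos (by linarith) hp1)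
    (hsol.continuousOn.mono (Icc_subset_Icc_left (by norm_num)))
    (fun x hx => hsol.hasDeriv x ⟨by linarith [hx.1], hx.2.le⟩) hgrad r ⟨hr.1, hr.2.le⟩
  rw [hsol.bd, sub_zero] at hbound
  convert hbound using 2
  rw [show lam * K / c1 = lam * (K / c1) by ring, Real.mul_rpow hlam.le (div_nonneg hK.le hc1.le)]
  field_simp

theorem lower_bound_near_boundary    (N : ℕ) (hN : 1 < N)
    (ϕ φ : ℝ → ℝ)
    (hϕc : Continuous ϕ) (hϕnn : ∀ s, 0 ≤ ϕ s) (hϕeven : ∀ s, ϕ (-s) = ϕ s)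
    (hϕdiff : ∀ s : ℝ, s ≠ 0 → DifferentiableAt ℝ ϕ s)
    (hϕmono : StrictMonoOn ϕ (Set.Ioi 0))
    (hφ : ∀ s, φ s = ϕ s * s)
    (p c1 c2 : ℝ) (hp : 1 < p) (hc1 : 0 < c1) (hc2 : 0 < c2)
    (hgrow : ∀ r : ℝ, 0 ≤ r → c2 * r ^ (p - 1) ≤ φ r ∧ φ r ≤ c1 * r ^ (p - 1))
    (f : ℝ → ℝ) (hfc : ContinuousOn f (Set.Ici 0)) (hfm : MonotoneOn f (Set.Ici 0))
    (hf0 : f 0 < 0) (u0 : ℝ) (hu0 : 0 < u0) (hfu0 : f u0 = 0)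
    (hzero : ∀ s : ℝ, 0 ≤ s → f s = 0 → s = u0)
 :
    ∃ C : ℝ, 0 < C ∧
      ∀ lam : ℝ, 0 < lam → ∀ u u' : ℝ → ℝ, IsPosSol N φ f lam u u' →
        (∀ r ∈ Set.Icc (3/4 : ℝ) 1, u' r ≤ 0) →
        (∀ r ∈ Set.Ico (3/4 : ℝ) 1, u r < u0 / 2) →
        ∀ r ∈ Set.Ico (3/4 : ℝ) 1,
          C * lam ^ (1 / (p - 1)) * (1 - r) ^ (p / (p - 1)) ≤ u r :=
  lower_bound_near_boundary_general N ϕ φ hϕc hϕnn hϕeven hφ p c1 c2 hp hc1 hgrow f hfm u0 hu0 hfu0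
    hzero
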